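/- Singular-integral bound for the second derivative of the sector Green's function: Let 0 < β < 1/2. For z, w in the sector Ω_β ⊆ ℂ, define P_β(z,w) := −((conj(w^{1/β}) − w^{1/β})/(4πβ²)) · ( z^{1/β−2} / ( (z^{1/β} − conj(w^{1/β}))² (z^{1/β} − w^{1/β})² ) ) · [ (1−β)(z^{1/β} − conj(w^{1/β}))(z^{1/β} − w^{1/β}) − z^{1/β}( 2 z^{1/β} − w^{1/β} − conj(w^{1/β}) ) ], where for z = r e^{iθ} with r > 0 and −π/2 < θ < π/2 one sets z^γ := r^γ e^{iγθ}. Then there exists a constant C = C(β) > 0 such that |P_β(z,w)| ≤ C / |z − w|² for all z, w ∈ Ω_β with z ≠ w. -/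

import Mathlib

open Set Complex
open scoped ENNReal NNReal Real

noncomputable section

/-- The open sector `Ω_β = { r e^{iθ} : r > 0, 0 < θ < βπ }` in `ℂ ≅ ℝ²`. -/
def Sector (β : ℝ) : Set ℂ := {z | z ≠ 0 ∧ 0 < Complex.arg z ∧ Complex.arg z < β * π}

/-- The Laplacian `ΔΨ = ∂_{x₁x₁}Ψ + ∂_{x₂x₂}Ψ` of a function `Ψ : ℂ → ℝ`. -/
def lap (Ψ : ℂ → ℝ) (z : ℂ) : ℝ :=
  fderiv ℝ (fun w => fderiv ℝ Ψ w 1) z 1 +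
    fderiv ℝ (fun w => fderiv ℝ Ψ w Complex.I) z Complex.I

/-- The kernel `P_β(z,w) = ∂_z K_β(z,w)`, the second derivative of the Green's function of
the sector `Ω_β`. Here `z^γ = r^γ e^{iγθ}` for `z = r e^{iθ}`, `-π/2 < θ < π/2`, which on
this region agrees with the principal-branch complex power. -/
def Pker (β : ℝ) (z w : ℂ) : ℂ :=
  let Z : ℂ := z ^ ((1/β : ℝ) : ℂ)
  let W : ℂ := w ^ ((1/β : ℝ) : ℂ)
  let Wb : ℂ := (starRingEnd ℂ) W;
  -(((Wb - W) / ((4 * π * β ^ 2 : ℝ) : ℂ)) *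
    ((z ^ ((1/β - 2 : ℝ) : ℂ)) / ((Z - Wb) ^ 2 * (Z - W) ^ 2)) *
    (((1 - β : ℝ) : ℂ) * (Z - Wb) * (Z - W) - Z * (2 * Z - W - Wb)))

/-!
Put `Z = z^(1/β)` and `W = w^(1/β)`; both lie in the upper half-plane, so
`‖Z - W‖ ≤ ‖Z - conj W‖` and `‖conj W - W‖ ≤ 2‖Z - conj W‖`. This cancels the factors
`Z - conj W` and bounds `‖P_β‖` by `‖z‖^(1/β-2) ((1-β)‖Z-W‖ + 2‖z‖^(1/β)) / (2πβ²‖Z-W‖²)`.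
It remains to bound `‖Z - W‖` below by a multiple of `‖z - w‖ max(‖z‖, ‖w‖)^(1/β-1)`; since
`‖z - w‖ ≤ 2 max(‖z‖, ‖w‖)` the powers of `max(‖z‖, ‖w‖)` then cancel, leaving `C / ‖z - w‖²`.
Along the segment from `w` to `z`, which stays in the convex sector, the derivative of `ξ^(1/β)`
is `(1/β) ξ^(1/β-1) (z - w)`, and `ξ^(1/β-1)` has argument in `(0, (1-β)π)`: after rotating by
`(1-β)π/2` its real part is at least `sin(βπ/2) ‖ξ‖^(1/β-1)`. So one component of
`(Z - W) / (z - w)` accumulates without cancellation along the segment, by a definite amount on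
the quarter next to the longer of `z`, `w`, where `‖ξ‖ ≥ max(‖z‖, ‖w‖) / 2`.
-/

open ComplexConjugate

lemma mem_sector_iff {β : ℝ} (hβ0 : 0 < β) (hβ1 : β ≤ 1) {z : ℂ} :
    z ∈ Sector β ↔ 0 < z.im ∧ z.im * Real.cos (β * π) < z.re * Real.sin (β * π) := by
  have hre : z.re = ‖z‖ * Real.cos z.arg := (Complex.norm_mul_cos_arg z).symm
  have him : z.im = ‖z‖ * Real.sin z.arg := (Complex.norm_mul_sin_arg z).symm
  have hcross : z.re * Real.sin (β * π) - z.im * Real.cos (β * π)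
      = ‖z‖ * Real.sin (β * π - z.arg) := by
    rw [hre, him, Real.sin_sub]; ring
  constructor
  · rintro ⟨hz, harg0, hargβ⟩
    have hnorm : 0 < ‖z‖ := norm_pos_iff.mpr hz
    refine ⟨?_, ?_⟩
    · rw [him]
      exact mul_pos hnorm (Real.sin_pos_of_pos_of_lt_pi harg0 (by nlinarith [Real.pi_pos]))
    · have := mul_pos hnorm (Real.sin_pos_of_pos_of_lt_pi (sub_pos.mpr hargβ)
        (by nlinarith [Real.pi_pos]))
      linarith
  · rintro ⟨him_pos, hcone⟩
    have hz : z ≠ 0 := fun h => by simp [h] at him_pos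
    have harg_pi : z.arg < π := Complex.arg_lt_pi_iff.mpr (Or.inr him_pos.ne')
    refine ⟨hz, ?_, ?_⟩
    · exact lt_of_le_of_ne (Complex.arg_nonneg_iff.mpr him_pos.le)
        (fun h => him_pos.ne' (Complex.arg_eq_zero_iff.mp h.symm).2)
    · by_contra! hge
      have := mul_nonpos_of_nonneg_of_nonpos (norm_nonneg z) (Real.sin_nonpos_of_nonpos_of_neg_pi_le
        (sub_nonpos.mpr hge) (by nlinarith [Real.pi_pos]))
      linarith

lemma convex_sector {β : ℝ} (hβ0 : 0 < β) (hβ1 : β ≤ 1) : Convex ℝ (Sector β) := by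
  rw [convex_iff_forall_pos]
  intro z hz w hw s t hs ht hst
  rw [mem_sector_iff hβ0 hβ1] at hz hw ⊢
  simp only [Complex.add_re, Complex.add_im, Complex.real_smul, Complex.mul_re, Complex.mul_im,
    Complex.ofReal_re, Complex.ofReal_im, zero_mul, sub_zero, add_zero]
  constructor <;> nlinarith [mul_pos hs hz.1, mul_pos ht hw.1]

lemma im_cpow_pos_of_mem_sector {β : ℝ} (hβ0 : 0 < β) {z : ℂ} (hz : z ∈ Sector β) :
    0 < (z ^ ((1/β : ℝ) : ℂ)).im := by
  obtain ⟨hz0, harg0, hargβ⟩ := hz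
  rw [Complex.cpow_ofReal_im]
  refine mul_pos (Real.rpow_pos_of_pos (norm_pos_iff.mpr hz0) _)
    (Real.sin_pos_of_pos_of_lt_pi (by positivity) ?_)
  calc z.arg * (1/β) < β * π * (1/β) := by gcongr
    _ = π := by field_simp

lemma mul_sub_le_image_sub_of_hasDerivAt {f f' : ℝ → ℝ} {a c b C : ℝ} (hac : a ≤ c) (hcb : c ≤ b)
    (hf : ∀ t ∈ Icc a b, HasDerivAt f (f' t) t) (hf'₀ : ∀ t ∈ Icc a c, 0 ≤ f' t)
    (hf'C : ∀ t ∈ Icc c b, C ≤ f' t) : C * (b - c) ≤ f b - f a := by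
  have hcont : ContinuousOn f (Icc a b) := fun t ht => (hf t ht).continuousAt.continuousWithinAt
  have hac_sub : Icc a c ⊆ Icc a b := Icc_subset_Icc_right hcb
  have hcb_sub : Icc c b ⊆ Icc a b := Icc_subset_Icc_left hac
  have hmono : f a ≤ f c := by
    refine monotoneOn_of_hasDerivWithinAt_nonneg (convex_Icc a c) (hcont.mono hac_sub)
      (fun t ht => (hf t (hac_sub (interior_subset ht))).hasDerivWithinAt)
      (fun t ht => hf'₀ t (interior_subset ht)) ⟨le_rfl, hac⟩ ⟨hac, le_rfl⟩ hac
  have hslope : C * (b - c) ≤ f b - f c := by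
    refine (convex_Icc c b).mul_sub_le_image_sub_of_le_deriv (hcont.mono hcb_sub)
      (fun t ht => (hf t (hcb_sub (interior_subset ht))).differentiableAt.differentiableWithinAt)
      (fun t ht => ?_) c ⟨le_rfl, hcb⟩ b ⟨hcb, le_rfl⟩ hcb
    rw [(hf t (hcb_sub (interior_subset ht))).deriv]
    exact hf'C t (interior_subset ht)
  linarith

lemma le_re_exp_mul_cpow_of_mem_sector {β : ℝ} (hβ0 : 0 < β) (hβ1 : β ≤ 1) {ζ : ℂ}
    (hζ : ζ ∈ Sector β) :
    Real.sin (β * π / 2) * ‖ζ‖ ^ (1/β - 1) ≤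
      (Complex.exp (-(((1 - β) * π / 2 : ℝ) : ℂ) * Complex.I) * ζ ^ ((1/β - 1 : ℝ) : ℂ)).re := by
  obtain ⟨-, harg0, hargβ⟩ := hζ
  set c₀ : ℝ := (1 - β) * π / 2 with hc₀
  have hre : (Complex.exp (-(c₀ : ℂ) * Complex.I) * ζ ^ ((1/β - 1 : ℝ) : ℂ)).re
      = ‖ζ‖ ^ (1/β - 1) * Real.cos (ζ.arg * (1/β - 1) - c₀) := by
    rw [Complex.mul_re, Complex.cpow_ofReal_re, Complex.cpow_ofReal_im, Real.cos_sub,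
      Complex.exp_re, Complex.exp_im]
    simp only [neg_mul, Complex.neg_re, Complex.mul_re, Complex.ofReal_re, Complex.I_re,
      mul_zero, Complex.ofReal_im, Complex.I_im, mul_one, sub_self, neg_zero, Real.exp_zero,
      Complex.neg_im, Complex.mul_im, Real.cos_neg, one_mul, Real.sin_neg, add_zero]
    ring
  -- `(1/β - 1) arg ζ` ranges over `(0, (1 - β) π) = (0, 2 c₀)`, on which `cos (· - c₀) ≥ cos c₀`.
  have hangle : |ζ.arg * (1/β - 1) - c₀| ≤ c₀ := by
    have hγ : 0 ≤ 1/β - 1 := by rw [sub_nonneg, le_div_iff₀ hβ0]; linarith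
    have hupper : ζ.arg * (1/β - 1) ≤ β * π * (1/β - 1) := by gcongr
    have hβπ : β * π * (1/β - 1) = 2 * c₀ := by rw [hc₀]; field_simp
    rw [abs_le]; constructor <;> nlinarith
  have hcos : Real.sin (β * π / 2) ≤ Real.cos (ζ.arg * (1/β - 1) - c₀) := by
    rw [← Real.cos_abs, show β * π / 2 = π / 2 - c₀ by ring, Real.sin_pi_div_two_sub]
    exact Real.cos_le_cos_of_nonneg_of_le_pi (abs_nonneg _)
      (by rw [hc₀]; nlinarith [Real.pi_pos]) hangle
  rw [hre, mul_comm]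
  exact mul_le_mul_of_nonneg_left hcos (Real.rpow_nonneg (norm_nonneg _) _)

lemma hasDerivAt_re_mul_cpow_segment {z w u : ℂ} {γ t : ℝ}
    (hslit : w + t * (z - w) ∈ Complex.slitPlane) :
    HasDerivAt (fun s : ℝ => (u * (w + s * (z - w)) ^ (γ : ℂ)).re)
      (γ * (u * (z - w) * (w + t * (z - w)) ^ ((γ - 1 : ℝ) : ℂ)).re) t := by
  have hline : HasDerivAt (fun s : ℂ => w + s * (z - w)) (z - w) (t : ℂ) := by
    simpa using ((hasDerivAt_id (t : ℂ)).mul_const (z - w)).const_add w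
  refine ((((Complex.hasStrictDerivAt_cpow_const (c := (γ : ℂ)) hslit).hasDerivAt.comp (t : ℂ)
    hline).const_mul u).real_of_complex).congr_deriv ?_
  rw [← Complex.re_ofReal_mul]
  push_cast
  ring_nf

lemma div_two_le_norm_add_mul_sub {z w : ℂ} (hwz : ‖w‖ ≤ ‖z‖) {t : ℝ}
    (ht : t ∈ Icc (3/4 : ℝ) 1) : ‖z‖ / 2 ≤ ‖w + t * (z - w)‖ := by
  have hdist : ‖z - (w + t * (z - w))‖ = (1 - t) * ‖z - w‖ := by
    rw [show z - (w + t * (z - w)) = ((1 - t : ℝ) : ℂ) * (z - w) by push_cast; ring, norm_mul,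
      Complex.norm_real, Real.norm_of_nonneg (by linarith [ht.2])]
  have htri := norm_sub_norm_le z (z - (w + t * (z - w)))
  rw [sub_sub_cancel] at htri
  have hzw : ‖z - w‖ ≤ 2 * ‖z‖ := by linarith [norm_sub_le z w]
  nlinarith [mul_le_mul_of_nonneg_right (show 1 - t ≤ 1/4 by linarith [ht.1])
    (norm_nonneg (z - w))]

lemma mul_le_norm_cpow_sub_cpow_of_norm_le {β : ℝ} (hβ0 : 0 < β) (hβ1 : β ≤ 1) {z w : ℂ}
    (hz : z ∈ Sector β) (hw : w ∈ Sector β) (hwz : ‖w‖ ≤ ‖z‖) :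
    Real.sin (β * π / 2) / (4 * β) * (‖z‖ / 2) ^ (1/β - 1) * ‖z - w‖ ≤
      ‖z ^ ((1/β : ℝ) : ℂ) - w ^ ((1/β : ℝ) : ℂ)‖ := by
  rcases eq_or_ne z w with rfl | hzw
  · simp
  have hzw' : z - w ≠ 0 := sub_ne_zero.mpr hzw
  set γ : ℝ := 1/β with hγ
  set e : ℂ := Complex.exp (-(((1 - β) * π / 2 : ℝ) : ℂ) * Complex.I)
  set ξ : ℝ → ℂ := fun t => w + t * (z - w)
  have hξ_mem : ∀ t ∈ Icc (0:ℝ) 1, ξ t ∈ Sector β := fun t ht => by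
    simpa [Complex.real_smul] using (convex_sector hβ0 hβ1).add_smul_sub_mem hw hz ht
  -- `f 1 - f 0` is a component of `(z^γ - w^γ) / (z - w)`; the rotation `e` makes `f'` nonnegative
  -- on the whole segment, and of size `‖z‖^(γ-1)` on its last quarter, where `‖ξ‖ ≥ ‖z‖/2`.
  set f : ℝ → ℝ := fun t => (e / (z - w) * ξ t ^ (γ : ℂ)).re
  set f' : ℝ → ℝ := fun t => γ * (e * ξ t ^ ((γ - 1 : ℝ) : ℂ)).re
  have hf : ∀ t ∈ Icc (0:ℝ) 1, HasDerivAt f (f' t) t := fun t ht => by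
    have hslit : ξ t ∈ Complex.slitPlane :=
      Complex.mem_slitPlane_iff.mpr (Or.inr ((mem_sector_iff hβ0 hβ1).mp (hξ_mem t ht)).1.ne')
    have := hasDerivAt_re_mul_cpow_segment (u := e / (z - w)) (γ := γ) hslit
    rwa [div_mul_cancel₀ _ hzw'] at this
  have hsin : 0 ≤ Real.sin (β * π / 2) :=
    Real.sin_nonneg_of_nonneg_of_le_pi (by positivity) (by nlinarith [Real.pi_pos])
  have hf'₀ : ∀ t ∈ Icc (0:ℝ) (3/4), 0 ≤ f' t := fun t ht =>
    mul_nonneg (by positivity) ((mul_nonneg hsin (Real.rpow_nonneg (norm_nonneg _) _)).trans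
      (le_re_exp_mul_cpow_of_mem_sector hβ0 hβ1 (hξ_mem t ⟨ht.1, by linarith [ht.2]⟩)))
  have hf'C : ∀ t ∈ Icc (3/4 : ℝ) 1,
      γ * (Real.sin (β * π / 2) * (‖z‖ / 2) ^ (γ - 1)) ≤ f' t := fun t ht => by
    refine mul_le_mul_of_nonneg_left (le_trans ?_ (le_re_exp_mul_cpow_of_mem_sector hβ0 hβ1
      (hξ_mem t ⟨by linarith [ht.1], ht.2⟩))) (by positivity)
    have hγ1 : 0 ≤ γ - 1 := by rw [sub_nonneg, hγ, le_div_iff₀ hβ0]; linarith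
    gcongr
    exact div_two_le_norm_add_mul_sub hwz ht
  have hmvt := mul_sub_le_image_sub_of_hasDerivAt (by norm_num) (by norm_num) hf hf'₀ hf'C
  have hincrement : f 1 - f 0 ≤ ‖z ^ (γ : ℂ) - w ^ (γ : ℂ)‖ / ‖z - w‖ := by
    calc f 1 - f 0 = (e / (z - w) * (z ^ (γ : ℂ) - w ^ (γ : ℂ))).re := by
          simp [f, ξ, mul_sub]
      _ ≤ ‖e / (z - w) * (z ^ (γ : ℂ) - w ^ (γ : ℂ))‖ := Complex.re_le_norm _
      _ = ‖z ^ (γ : ℂ) - w ^ (γ : ℂ)‖ / ‖z - w‖ := by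
          rw [norm_mul, norm_div, show ‖e‖ = 1 by simp [e, Complex.norm_exp], one_div_mul_eq_div]
  rw [← le_div_iff₀ (norm_pos_iff.mpr hzw')]
  calc Real.sin (β * π / 2) / (4 * β) * (‖z‖ / 2) ^ (1/β - 1)
      = γ * (Real.sin (β * π / 2) * (‖z‖ / 2) ^ (γ - 1)) * (1 - 3/4) := by
        rw [hγ]; field_simp; ring
    _ ≤ _ := hmvt.trans hincrement

lemma exists_pos_mul_le_norm_cpow_sub_cpow {β : ℝ} (hβ0 : 0 < β) (hβ1 : β ≤ 1) :
    ∃ κ > 0, ∀ z ∈ Sector β, ∀ w ∈ Sector β,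
      κ * ‖z - w‖ * max ‖z‖ ‖w‖ ^ (1/β - 1) ≤ ‖z ^ ((1/β : ℝ) : ℂ) - w ^ ((1/β : ℝ) : ℂ)‖ := by
  have hsin : 0 < Real.sin (β * π / 2) :=
    Real.sin_pos_of_pos_of_lt_pi (by positivity) (by nlinarith [Real.pi_pos])
  refine ⟨Real.sin (β * π / 2) / (4 * β) / 2 ^ (1/β - 1), by positivity, ?_⟩
  have hhalf : ∀ x : ℝ, 0 ≤ x → (x / 2) ^ (1/β - 1) = x ^ (1/β - 1) / 2 ^ (1/β - 1) :=
    fun x hx => Real.div_rpow hx zero_le_two _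
  intro z hz w hw
  rcases le_total ‖w‖ ‖z‖ with hwz | hzw
  · have := mul_le_norm_cpow_sub_cpow_of_norm_le hβ0 hβ1 hz hw hwz
    rw [max_eq_left hwz]
    rw [hhalf _ (norm_nonneg _)] at this
    exact (le_of_eq (by ring)).trans this
  · have := mul_le_norm_cpow_sub_cpow_of_norm_le hβ0 hβ1 hw hz hzw
    rw [max_eq_right hzw, norm_sub_rev z, norm_sub_rev (z ^ _)]
    rw [hhalf _ (norm_nonneg _)] at this
    exact (le_of_eq (by ring)).trans this

lemma norm_sub_le_norm_sub_conj {Z W : ℂ} (hZ : 0 ≤ Z.im) (hW : 0 ≤ W.im) :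
    ‖Z - W‖ ≤ ‖Z - conj W‖ := by
  rw [← sq_le_sq₀ (norm_nonneg _) (norm_nonneg _), Complex.sq_norm, Complex.sq_norm,
    Complex.normSq_apply, Complex.normSq_apply]
  simp only [Complex.sub_re, Complex.sub_im, Complex.conj_re, Complex.conj_im]
  nlinarith [mul_nonneg hZ hW]

lemma norm_conj_sub_self_le {Z W : ℂ} (hZ : 0 ≤ Z.im) (hW : 0 ≤ W.im) :
    ‖conj W - W‖ ≤ 2 * ‖Z - conj W‖ := by
  have him : |(Z - conj W).im| ≤ ‖Z - conj W‖ := Complex.abs_im_le_norm _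
  have hre : |(conj W - W).re| + |(conj W - W).im| = 2 * W.im := by
    simp only [Complex.sub_re, Complex.sub_im, Complex.conj_re, Complex.conj_im]
    rw [sub_self, abs_zero, show -W.im - W.im = -(2 * W.im) by ring, abs_neg,
      abs_of_nonneg (by linarith)]
    ring
  simp only [Complex.sub_im, Complex.conj_im] at him
  rw [abs_of_nonneg (by linarith)] at him
  linarith [Complex.norm_le_abs_re_add_abs_im (conj W - W)]

lemma norm_Pker_le {β : ℝ} (hβ0 : 0 < β) (hβ1 : β ≤ 1) {z w : ℂ}
    (hZ : 0 < (z ^ ((1/β : ℝ) : ℂ)).im) (hW : 0 < (w ^ ((1/β : ℝ) : ℂ)).im) :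
    ‖Pker β z w‖ ≤ ‖z‖ ^ (1/β - 2) *
        ((1 - β) * ‖z ^ ((1/β : ℝ) : ℂ) - w ^ ((1/β : ℝ) : ℂ)‖ + 2 * ‖z‖ ^ (1/β)) /
      (2 * π * β ^ 2 * ‖z ^ ((1/β : ℝ) : ℂ) - w ^ ((1/β : ℝ) : ℂ)‖ ^ 2) := by
  set Z := z ^ ((1/β : ℝ) : ℂ)
  set W := w ^ ((1/β : ℝ) : ℂ)
  set a := ‖Z - conj W‖
  set b := ‖Z - W‖
  have ha : 0 < a := by
    have := Complex.abs_im_le_norm (Z - conj W)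
    simp only [Complex.sub_im, Complex.conj_im, sub_neg_eq_add] at this
    linarith [le_abs_self (Z.im + W.im)]
  have hba : b ≤ a := norm_sub_le_norm_sub_conj hZ.le hW.le
  have hnormZ : ‖Z‖ = ‖z‖ ^ (1/β) := Complex.norm_cpow_real z _
  have hbracket : ‖((1 - β : ℝ) : ℂ) * (Z - conj W) * (Z - W) - Z * (2 * Z - W - conj W)‖
      ≤ a * ((1 - β) * b + 2 * ‖z‖ ^ (1/β)) := by
    rw [show 2 * Z - W - conj W = (Z - W) + (Z - conj W) by ring]
    calc _ ≤ ‖((1 - β : ℝ) : ℂ) * (Z - conj W) * (Z - W)‖ + ‖Z‖ * (b + a) := by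
          refine (norm_sub_le _ _).trans (add_le_add_right ?_ _)
          rw [norm_mul]
          gcongr
          exact norm_add_le _ _
      _ = (1 - β) * a * b + ‖z‖ ^ (1/β) * (b + a) := by
          rw [norm_mul, norm_mul, Complex.norm_real, Real.norm_of_nonneg (by linarith), hnormZ]
      _ ≤ a * ((1 - β) * b + 2 * ‖z‖ ^ (1/β)) := by
          nlinarith [Real.rpow_nonneg (norm_nonneg z) (1/β)]
  have hunfold : Pker β z w = -(((conj W - W) / ((4 * π * β ^ 2 : ℝ) : ℂ)) *
      (z ^ ((1/β - 2 : ℝ) : ℂ) / ((Z - conj W) ^ 2 * (Z - W) ^ 2)) *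
      (((1 - β : ℝ) : ℂ) * (Z - conj W) * (Z - W) - Z * (2 * Z - W - conj W))) := rfl
  rw [hunfold, norm_neg, norm_mul, norm_mul, norm_div, norm_div, norm_mul, norm_pow, norm_pow,
    Complex.norm_real, Real.norm_of_nonneg (by positivity), Complex.norm_cpow_real]
  calc _ ≤ 2 * a / (4 * π * β ^ 2) * (‖z‖ ^ (1/β - 2) / (a ^ 2 * b ^ 2)) *
        (a * ((1 - β) * b + 2 * ‖z‖ ^ (1/β))) := by
        gcongr
        exact norm_conj_sub_self_le hZ.le hW.le
    _ = _ := by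
        field_simp
        ring

lemma rpow_mul_div_sq_le_of_mul_rpow_le {β q m d b κ : ℝ} (hβ0 : 0 < β) (hβ : β ≤ 1/2) (hq : 0 < q)
    (hqm : q ≤ m) (hd : 0 < d) (hdm : d ≤ 2 * m) (hκ : 0 < κ) (hb : κ * d * m ^ (1/β - 1) ≤ b) :
    q ^ (1/β - 2) * ((1 - β) * b + 2 * q ^ (1/β)) / (2 * π * β ^ 2 * b ^ 2) ≤
      (1/κ + 1/κ ^ 2) / (π * β ^ 2) / d ^ 2 := by
  have hm : 0 < m := hq.trans_le hqm
  set v := m ^ (1/β - 1)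
  have hv : 0 < v := Real.rpow_pos_of_pos hm _
  have hb0 : 0 < b := lt_of_lt_of_le (by positivity) hb
  have hγ : 2 ≤ 1/β := by rw [le_div_iff₀ hβ0]; linarith
  have hqv : q ^ (1/β - 2) ≤ v / m := by
    rw [← Real.rpow_sub_one hm.ne', show 1/β - 1 - 1 = 1/β - 2 by ring]
    exact Real.rpow_le_rpow hq.le hqm (by linarith)
  have hqv_sq : q ^ (1/β - 2) * q ^ (1/β) ≤ v * v := by
    rw [← Real.rpow_add hq, show 1/β - 2 + 1/β = (1/β - 1) + (1/β - 1) by ring,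
      Real.rpow_add hq]
    have := Real.rpow_le_rpow hq.le hqm (show 0 ≤ 1/β - 1 by linarith)
    exact mul_le_mul this this (by positivity) hv.le
  have hvd : v * d ≤ b / κ := by rw [le_div_iff₀ hκ]; linarith
  have hlin : q ^ (1/β - 2) * d ^ 2 ≤ 2 * (b / κ) := by
    calc q ^ (1/β - 2) * d ^ 2 ≤ v / m * (d * (2 * m)) := by
          rw [sq]; gcongr
      _ = 2 * (v * d) := by field_simp
      _ ≤ 2 * (b / κ) := by gcongr
  have hquad : q ^ (1/β - 2) * q ^ (1/β) * d ^ 2 ≤ (b / κ) ^ 2 := by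
    calc _ ≤ v * v * d ^ 2 := by gcongr
      _ = (v * d) ^ 2 := by ring
      _ ≤ (b / κ) ^ 2 := by gcongr
  rw [div_le_div_iff₀ (by positivity) (by positivity)]
  calc q ^ (1/β - 2) * ((1 - β) * b + 2 * q ^ (1/β)) * d ^ 2
      = (1 - β) * b * (q ^ (1/β - 2) * d ^ 2) + 2 * (q ^ (1/β - 2) * q ^ (1/β) * d ^ 2) := by
        ring
    _ ≤ 1 * b * (2 * (b / κ)) + 2 * (b / κ) ^ 2 := by
        gcongr
        linarith
    _ = (1/κ + 1/κ ^ 2) / (π * β ^ 2) * (2 * π * β ^ 2 * b ^ 2) := by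
        field_simp

theorem sector_kernel_bound (β : ℝ) (hβ0 : 0 < β) (hβ : β < 1/2) :
    ∃ C : ℝ, 0 < C ∧
      ∀ z ∈ Sector β, ∀ w ∈ Sector β, z ≠ w →
        ‖Pker β z w‖ ≤ C / ‖z - w‖ ^ 2 := by
  have hβ1 : β ≤ 1 := by linarith
  obtain ⟨κ, hκ, hlower⟩ := exists_pos_mul_le_norm_cpow_sub_cpow hβ0 hβ1
  refine ⟨(1/κ + 1/κ ^ 2) / (π * β ^ 2), by positivity, fun z hz w hw hzw => ?_⟩
  have hdm : ‖z - w‖ ≤ 2 * max ‖z‖ ‖w‖ := by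
    linarith [norm_sub_le z w, le_max_left ‖z‖ ‖w‖, le_max_right ‖z‖ ‖w‖]
  exact (norm_Pker_le hβ0 hβ1 (im_cpow_pos_of_mem_sector hβ0 hz)
    (im_cpow_pos_of_mem_sector hβ0 hw)).trans
    (rpow_mul_div_sq_le_of_mul_rpow_le hβ0 hβ.le (norm_pos_iff.mpr hz.1) (le_max_left _ _)
      (norm_pos_iff.mpr (sub_ne_zero.mpr hzw)) hdm hκ (hlower z hz w hw))
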